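/- arXiv:2206.10278 — 3 statements merged into one kernel-verified Lean document; each statement's English description precedes it below -/
import Mathlib

section
/- With B_n as defined (the n×n bordered matrix [[0, e'],[e, T_{n-1}(-2,-2,-2)]]) and T_n the tridiagonal matrix with all nonzero entries equal to −2, for n ≥ 5 the recurrence det(B_n) = 4·det(T_{n-4}) + 8·det(B_{n-3}) holds. -/
open Matrix

noncomputable section

/-- Tridiagonal matrix of order `m` with `a` on the diagonal, `b` on the superdiagonal
and `c` on the subdiagonal. -/
def tridiag {R : Type*} [Zero R] (m : ℕ) (a b c : R) : Matrix (Fin m) (Fin m) R :=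
  Matrix.of fun i j =>
    if (i : ℕ) = (j : ℕ) then a
    else if (j : ℕ) = (i : ℕ) + 1 then b
    else if (i : ℕ) = (j : ℕ) + 1 then c
    else 0

/-- The bordered matrix `[[0, e'],[e, A]]` where `e` is the all-ones vector. -/
def border {R : Type*} [Zero R] [One R] {m : ℕ} (A : Matrix (Fin m) (Fin m) R) :
    Matrix (Fin (m + 1)) (Fin (m + 1)) R :=
  Matrix.of fun i j =>
    if hi : i = 0 then (if j = 0 then 0 else 1)
    else if hj : j = 0 then 1
    else A (i.pred hi) (j.pred hj)

/-- The circulant matrix whose first row is `c`, each subsequent row the cyclic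
right shift of the previous one. -/
def circ {R : Type*} {m : ℕ} (c : Fin m → R) : Matrix (Fin m) (Fin m) R :=
  Matrix.of fun i j => c (j - i)

/-- The eccentricity matrix of the wheel graph `W_n` (hub is vertex `0`, cycle vertices
`1, …, n-1`): `E(W_n) = [[0, e'],[e, circ(0,0,2,…,2,0)]]`. -/
def EW (n : ℕ) : Matrix (Fin n) (Fin n) ℝ :=
  Matrix.of fun i j =>
    if i = j then 0
    else if (i : ℕ) = 0 ∨ (j : ℕ) = 0 then 1
    else if ((j : ℕ) : ZMod (n - 1)) - ((i : ℕ) : ZMod (n - 1)) = 1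
            ∨ ((i : ℕ) : ZMod (n - 1)) - ((j : ℕ) : ZMod (n - 1)) = 1 then 0
    else 2

/-! Write `t k`, `p k` and `d k` for the determinants of `T_k`, of `border T_{k+1}` with its first
row and last column deleted, and of `border T_k`. Laplace expansion along the last row gives
`t (k+2) = -2 t (k+1) - 4 t k`, `p (k+1) = -2 p k - (-1)^k t (k+1)` and
`d (k+2) = -2 d (k+1) - 4 d k + (-1)^k (p (k+1) - 2 p k)`.
Since `x² + 2x + 4` divides `x³ - 8`, the first two give `t (k+3) = 8 t k` and `p (k+3) = -8 p k`;
hence `D k = d (k+3) - 4 t k - 8 d k` satisfies the homogeneous recurrence of `t`, and it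
vanishes because `D 0 = D 1 = 0`. -/

theorem Fin.val_succAbove {n : ℕ} (p : Fin (n + 1)) (i : Fin n) :
    (p.succAbove i : ℕ) = if (i : ℕ) < p then (i : ℕ) else i + 1 := by
  rcases lt_or_ge i.castSucc p with h | h
  · rw [Fin.succAbove_of_castSucc_lt _ _ h, if_pos (show (i : ℕ) < p from h), Fin.val_castSucc]
  · rw [Fin.succAbove_of_le_castSucc _ _ h, if_neg (show ¬ (i : ℕ) < p from not_lt.mpr h),
      Fin.val_succ]

section Tridiag

variable {R : Type*} [CommRing R] {m : ℕ} {a b c : R} {i j : Fin m}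

theorem tridiag_apply_self : tridiag m a b c i i = a := by
  simp [tridiag]

theorem tridiag_apply_of_val_eq_succ (h : (j : ℕ) = i + 1) : tridiag m a b c i j = b := by
  simp only [tridiag, of_apply]
  split_ifs <;> first | rfl | omega

theorem tridiag_apply_of_val_succ_eq (h : (i : ℕ) = j + 1) : tridiag m a b c i j = c := by
  simp only [tridiag, of_apply]
  split_ifs <;> first | rfl | omega

theorem tridiag_apply_of_not_adjacent (h : (i : ℕ) + 1 < j ∨ (j : ℕ) + 1 < i) :
    tridiag m a b c i j = 0 := by
  simp only [tridiag, of_apply]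
  split_ifs <;> first | rfl | omega

variable (m a b c)

theorem tridiag_submatrix_castSucc :
    (tridiag (m + 1) a b c).submatrix Fin.castSucc Fin.castSucc = tridiag m a b c := by
  ext i j
  simp [tridiag]

theorem det_tridiag_submatrix_castSucc_succAbove :
    ((tridiag (m + 2) a b c).submatrix Fin.castSucc (Fin.last m).castSucc.succAbove).det =
      b * (tridiag m a b c).det := by
  have hsub : ((tridiag (m + 2) a b c).submatrix Fin.castSucc
      (Fin.last m).castSucc.succAbove).submatrix Fin.castSucc Fin.castSucc = tridiag m a b c := by
    ext i j
    simp only [submatrix_apply, tridiag, of_apply, Fin.val_succAbove, Fin.val_castSucc,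
      Fin.val_last]
    split_ifs <;> first | rfl | omega
  rw [det_succ_column _ (Fin.last _), Fintype.sum_eq_single (Fin.last _) fun i hi => by
    rw [submatrix_apply, Fin.succAbove_castSucc_self,
      tridiag_apply_of_not_adjacent (by have := Fin.val_lt_last hi; simp; omega),
      mul_zero, zero_mul], Fin.succAbove_last, hsub, submatrix_apply,
    Fin.succAbove_castSucc_self, tridiag_apply_of_val_eq_succ (by simp), ← two_mul, pow_mul]
  simp

theorem det_tridiag_succ_succ :
    (tridiag (m + 2) a b c).det =
      a * (tridiag (m + 1) a b c).det - b * c * (tridiag m a b c).det := by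
  rw [det_succ_row _ (Fin.last _), Fin.sum_univ_castSucc, Fin.sum_univ_castSucc,
    Finset.sum_eq_zero fun j _ => by
      rw [tridiag_apply_of_not_adjacent (by simp), mul_zero, zero_mul],
    tridiag_apply_of_val_succ_eq (by simp), tridiag_apply_self, Fin.succAbove_last,
    det_tridiag_submatrix_castSucc_succAbove, tridiag_submatrix_castSucc]
  simp
  ring

end Tridiag

section Border

variable {R : Type*} [CommRing R] (m : ℕ) (a b c : R)

-- Entries by index values, so that identities between minors reduce to `omega`.
theorem border_tridiag_apply (i j : Fin (m + 1)) :
    border (tridiag m a b c) i j =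
      if (i : ℕ) = 0 then (if (j : ℕ) = 0 then 0 else 1)
      else if (j : ℕ) = 0 then 1
      else if (i : ℕ) = j then a
      else if (j : ℕ) = i + 1 then b
      else if (i : ℕ) = j + 1 then c
      else 0 := by
  induction i using Fin.cases <;> induction j using Fin.cases <;> simp [border, tridiag]

theorem border_tridiag_submatrix_castSucc :
    (border (tridiag (m + 1) a b c)).submatrix Fin.castSucc Fin.castSucc =
      border (tridiag m a b c) := by
  ext i j
  simp only [submatrix_apply, border_tridiag_apply, Fin.val_castSucc]

theorem det_border_tridiag_submatrix_succ_castSucc :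
    ((border (tridiag (m + 2) a b c)).submatrix Fin.succ Fin.castSucc).det =
      c * ((border (tridiag (m + 1) a b c)).submatrix Fin.succ Fin.castSucc).det
        - (-1) ^ m * (tridiag (m + 1) a b c).det := by
  set P := (border (tridiag (m + 2) a b c)).submatrix Fin.succ Fin.castSucc
  have hT : P.submatrix Fin.castSucc Fin.succ = tridiag (m + 1) a b c := by
    ext i j
    simp only [P, submatrix_apply, border_tridiag_apply, Fin.val_castSucc, Fin.val_succ,
      Nat.add_one_ne_zero, ↓reduceIte]
    simp only [tridiag, of_apply]
    split_ifs <;> first | rfl | omega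
  have hP : P.submatrix Fin.castSucc Fin.castSucc =
      (border (tridiag (m + 1) a b c)).submatrix Fin.succ Fin.castSucc := by
    ext i j
    simp only [P, submatrix_apply, border_tridiag_apply, Fin.val_castSucc, Fin.val_succ]
  have hzero : ∀ j : Fin m, P (Fin.last _) j.castSucc.succ = 0 := fun j => by
    simp only [P, submatrix_apply, border_tridiag_apply, Fin.val_castSucc, Fin.val_succ,
      Fin.val_last, Nat.add_one_ne_zero, ↓reduceIte]
    split_ifs <;> first | rfl | omega
  have hc : P (Fin.last _) (Fin.last _) = c := by simp [P, border_tridiag_apply]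
  have hone : P (Fin.last _) 0 = 1 := by simp [P, border_tridiag_apply]
  rw [det_succ_row _ (Fin.last _), Fin.sum_univ_succ, Fin.sum_univ_castSucc,
    Finset.sum_eq_zero fun j _ => by rw [hzero, mul_zero, zero_mul], Fin.succ_last, hc, hone,
    Fin.succAbove_last, Fin.succAbove_zero, hT, hP]
  simp
  ring

theorem det_border_tridiag_submatrix_castSucc_succAbove :
    ((border (tridiag (m + 2) a b b)).submatrix Fin.castSucc
      (Fin.last (m + 1)).castSucc.succAbove).det =
      b * (border (tridiag m a b b)).det
        - (-1) ^ m * ((border (tridiag (m + 1) a b b)).submatrix Fin.succ Fin.castSucc).det := by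
  set M := (border (tridiag (m + 2) a b b)).submatrix Fin.castSucc
    (Fin.last (m + 1)).castSucc.succAbove
  have hB : M.submatrix Fin.castSucc Fin.castSucc = border (tridiag m a b b) := by
    ext i j
    simp only [M, submatrix_apply, border_tridiag_apply, Fin.val_castSucc, Fin.val_succAbove,
      Fin.val_last]
    split_ifs <;> first | rfl | omega
  have hP : M.submatrix Fin.succ Fin.castSucc =
      (border (tridiag (m + 1) a b b)).submatrix Fin.succ Fin.castSucc := by
    ext i j
    simp only [M, submatrix_apply, border_tridiag_apply, Fin.val_castSucc, Fin.val_succ,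
      Fin.val_succAbove, Fin.val_last]
    split_ifs <;> first | rfl | omega
  have hzero : ∀ i : Fin m, M i.succ.castSucc (Fin.last _) = 0 := fun i => by
    simp only [M, submatrix_apply, border_tridiag_apply, Fin.val_castSucc, Fin.val_succ,
      Fin.val_succAbove, Fin.val_last, lt_self_iff_false, Nat.add_one_ne_zero, ↓reduceIte]
    split_ifs <;> first | rfl | omega
  have hone : M 0 (Fin.last _) = 1 := by simp [M, border_tridiag_apply]
  have hb : M (Fin.last _) (Fin.last _) = b := by simp [M, border_tridiag_apply]
  rw [det_succ_column _ (Fin.last _), Fin.sum_univ_castSucc, Fin.sum_univ_succ,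
    Finset.sum_eq_zero fun i _ => by rw [hzero, mul_zero, zero_mul], Fin.castSucc_zero, hone, hb,
    Fin.succAbove_last, Fin.succAbove_zero, hB, hP]
  simp
  ring

theorem det_border_tridiag_succ_succ :
    (border (tridiag (m + 2) a b b)).det =
      a * (border (tridiag (m + 1) a b b)).det - b ^ 2 * (border (tridiag m a b b)).det
        + (-1) ^ m * (b * ((border (tridiag (m + 1) a b b)).submatrix Fin.succ Fin.castSucc).det
          + ((border (tridiag (m + 2) a b b)).submatrix Fin.succ Fin.castSucc).det) := by
  set B := border (tridiag (m + 2) a b b)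
  -- This is where the symmetry of the tridiagonal block is needed.
  have hT : B.submatrix Fin.castSucc Fin.succ = (B.submatrix Fin.succ Fin.castSucc)ᵀ := by
    ext i j
    simp only [B, submatrix_apply, transpose_apply, border_tridiag_apply, Fin.val_castSucc,
      Fin.val_succ]
    split_ifs <;> first | rfl | omega
  have hzero : ∀ j : Fin m, B (Fin.last _) j.succ.castSucc.castSucc = 0 := fun j => by
    simp only [B, border_tridiag_apply, Fin.val_castSucc, Fin.val_succ, Fin.val_last,
      Nat.add_one_ne_zero, ↓reduceIte]
    split_ifs <;> first | rfl | omega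
  have hone : B (Fin.last _) 0 = 1 := by simp [B, border_tridiag_apply]
  have hb : B (Fin.last _) (Fin.last _).castSucc = b := by simp [B, border_tridiag_apply]
  have ha : B (Fin.last _) (Fin.last _) = a := by simp [B, border_tridiag_apply]
  have hodd : (-1 : R) ^ (m + 2 + (m + 1)) = -1 := Odd.neg_one_pow ⟨m + 1, by ring⟩
  have heven : (-1 : R) ^ (m + 2 + (m + 2)) = 1 := Even.neg_one_pow ⟨m + 2, rfl⟩
  rw [det_succ_row _ (Fin.last _), Fin.sum_univ_castSucc, Fin.sum_univ_castSucc, Fin.sum_univ_succ,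
    Finset.sum_eq_zero fun j _ => by rw [hzero, mul_zero, zero_mul], Fin.castSucc_zero,
    Fin.castSucc_zero, hone, hb, ha, Fin.succAbove_last, Fin.succAbove_zero, hT, det_transpose,
    det_border_tridiag_submatrix_castSucc_succAbove, border_tridiag_submatrix_castSucc]
  simp only [Fin.val_last, Fin.val_castSucc, Fin.val_zero, add_zero, hodd, heven]
  ring

end Border

theorem add_three_eq_of_recurrences {R : Type*} [CommRing R] (t p d : ℕ → R)
    (ht : ∀ m, t (m + 2) = -2 * t (m + 1) - 4 * t m)
    (hp : ∀ m, p (m + 1) = -2 * p m - (-1) ^ m * t (m + 1))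
    (hd : ∀ m, d (m + 2) = -2 * d (m + 1) - 4 * d m + (-1) ^ m * (-2 * p m + p (m + 1)))
    (ht0 : t 0 = 1) (ht1 : t 1 = -2) (hp0 : p 0 = 1) (hd0 : d 0 = 0) (hd1 : d 1 = -1) (m : ℕ) :
    d (m + 3) = 4 * t m + 8 * d m := by
  have hp3 (k : ℕ) : p (k + 3) = -8 * p k := by
    linear_combination hp (k + 2) - 2 * hp (k + 1) + 4 * hp k - (-1) ^ k * ht (k + 1)
  induction m using Nat.twoStepInduction with
  | zero =>
    simp only [hd, hp, ht, ht0, ht1, hp0, hd0, hd1]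
    norm_num
  | one =>
    simp only [hd, hp, ht, ht0, ht1, hp0, hd0, hd1]
    norm_num
  | more k ih₀ ih₁ =>
    linear_combination hd (k + 3) - 8 * hd k - 2 * ih₁ - 4 * ih₀ - 4 * ht k
      + 2 * (-1) ^ k * hp3 k - (-1) ^ k * hp3 (k + 1)

theorem stmt3 (n : ℕ) (h : 5 ≤ n) :
    (border (tridiag (n - 1) (-2 : ℝ) (-2) (-2))).det =
      4 * (tridiag (n - 4) (-2 : ℝ) (-2) (-2)).det
        + 8 * (border (tridiag (n - 4) (-2 : ℝ) (-2) (-2))).det := by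
  obtain ⟨m, rfl⟩ : ∃ m, n = m + 4 := ⟨n - 4, by omega⟩
  rw [show m + 4 - 1 = m + 3 by omega, Nat.add_sub_cancel]
  refine add_three_eq_of_recurrences (fun k => (tridiag k (-2 : ℝ) (-2) (-2)).det)
    (fun k => ((border (tridiag (k + 1) (-2 : ℝ) (-2) (-2))).submatrix Fin.succ Fin.castSucc).det)
    (fun k => (border (tridiag k (-2 : ℝ) (-2) (-2))).det)
    (fun k => ?_) (fun k => det_border_tridiag_submatrix_succ_castSucc k _ _ _) (fun k => ?_)
    det_isEmpty ?_ ?_ ?_ ?_ m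
  · simp only [det_tridiag_succ_succ]; ring
  · simp only [det_border_tridiag_succ_succ]; ring
  · simp [det_unique, tridiag]
  · simp [det_unique, border]
  · simp [det_unique, border]
  · simp [det_fin_two, border]
end
end

section
/- For n ≥ 5, the eccentricity matrix E(W_n) of the wheel graph on n vertices satisfies det(E(W_n)) = 2^{n-2}(1−n) if n ≢ 1 (mod 3), and det(E(W_n)) = 0 if n ≡ 1 (mod 3). -/
/-!
Write `n = m + 1` and let `T` be the identity plus the adjacency matrix of the `m`-cycle, i.e. the
circulant on `ZMod m` with symbol `δ₀ + δ₁ + δ₋₁`. Then `E(W_n)` is the all-ones border around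
`2J - 2T`. Subtracting twice the first row from the others removes `2J`, and since `T 1 = 3 • 1` a column
operation gives `-6 det E(W_n) = -m det (-2T)`.

The characters `ψ_k = ψ(k ·)` of `ZMod m` diagonalise `T` with eigenvalues `1 + ζ + ζ⁻¹`, where `ζ`
runs over the `m`-th roots of unity. Writing `1 + ζ + ζ⁻¹ = ζ⁻¹ (ω - ζ)(ω² - ζ)` for a primitive
cube root of unity `ω` and evaluating `∏ (x - ζ) = x ^ m - 1` at `0`, `ω` and `ω²` gives
`det T = (-1)^(m+1) (ω^m - 1)(ω^(2m) - 1)`, which is `(-1)^(m+1) 3` if `3 ∤ m` and `0` otherwise.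
-/

open Matrix

noncomputable section

open ZMod

theorem IsPrimitiveRoot.sq_add_self_add_one {R : Type*} [CommRing R] [IsDomain R] {ζ : R}
    (h : IsPrimitiveRoot ζ 3) : ζ ^ 2 + ζ + 1 = 0 := by
  have := h.geom_sum_eq_zero (by norm_num)
  simp only [Finset.sum_range_succ, Finset.sum_range_zero] at this
  linear_combination this

theorem circulant_mulVec_addChar {G R : Type*} [AddCommGroup G] [Fintype G] [CommRing R]
    (v : G → R) (ψ : AddChar G R) :
    circulant v *ᵥ ψ = (∑ g, v g * ψ (-g)) • ⇑ψ := by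
  ext p
  simp only [mulVec, dotProduct, circulant_apply, Pi.smul_apply, smul_eq_mul, Finset.sum_mul]
  rw [← (Equiv.subLeft p).sum_comp]
  refine Finset.sum_congr rfl fun g _ => ?_
  rw [Equiv.subLeft_apply, sub_sub_cancel, sub_eq_add_neg, AddChar.map_add_eq_mul]
  ring

namespace ZMod

theorem two_ne_zero_of_three_le {m : ℕ} (hm : 3 ≤ m) : (2 : ZMod m) ≠ 0 := by
  rw [← Nat.cast_ofNat, Ne, natCast_eq_zero_iff]
  exact fun h => absurd (Nat.le_of_dvd two_pos h) (by omega)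

variable {m : ℕ} [NeZero m]

theorem finEquiv_apply (i : Fin m) : finEquiv m i = (i : ℕ) := by
  cases m with
  | zero => exact (NeZero.ne 0 rfl).elim
  | succ k => exact (Fin.cast_val_eq_self i).symm

theorem det_stdAddChar_mul_ne_zero :
    (of fun g k : ZMod m => stdAddChar (k * g)).det ≠ 0 := by
  have hinv : (of fun g k : ZMod m => stdAddChar (k * g)) * (of fun k h => stdAddChar (-(k * h)))
      = (m : ℂ) • 1 := by
    ext g h
    have hsum := AddChar.sum_mulShift (g - h) (isPrimitive_stdAddChar m)
    simp only [mul_apply, of_apply, ← AddChar.map_add_eq_mul,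
      show ∀ x, x * g + -(x * h) = x * (g - h) from fun x => by ring, hsum, ZMod.card,
      sub_eq_zero, Matrix.smul_apply, one_apply, smul_eq_mul]
    split_ifs <;> simp
  intro h0
  have := congrArg det hinv
  rw [det_mul, h0, zero_mul, det_smul, det_one, mul_one, ZMod.card] at this
  exact pow_ne_zero _ (Nat.cast_ne_zero.mpr (NeZero.ne m)) this.symm

/-- The characters `ψ.mulShift k` form a basis of `ZMod m → ℂ`, so a matrix having each of them
as an eigenvector is diagonalised by them. -/
theorem det_eq_prod_of_mulVec_mulShift (A : Matrix (ZMod m) (ZMod m) ℂ) (μ : ZMod m → ℂ)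
    (hA : ∀ k, A *ᵥ stdAddChar.mulShift k = μ k • ⇑(stdAddChar.mulShift k)) :
    A.det = ∏ k, μ k := by
  set F : Matrix (ZMod m) (ZMod m) ℂ := of fun g k => stdAddChar (k * g)
  have hdiag : A * F = F * diagonal μ := by
    ext p k
    rw [mul_apply, mul_diagonal]
    simpa [mulVec, dotProduct, F, mul_comm] using congrFun (hA k) p
  have := congrArg det hdiag
  rw [det_mul, det_mul, det_diagonal, mul_comm] at this
  exact mul_left_cancel₀ det_stdAddChar_mul_ne_zero this

theorem isPrimitiveRoot_stdAddChar_one : IsPrimitiveRoot (stdAddChar (1 : ZMod m)) m := by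
  have h1 := stdAddChar_coe (N := m) 1
  rw [Int.cast_one] at h1
  rw [h1]
  simpa using Complex.isPrimitiveRoot_exp m (NeZero.ne m)

open Polynomial in
theorem prod_sub_stdAddChar (x : ℂ) : ∏ k : ZMod m, (x - stdAddChar k) = x ^ m - 1 := by
  have hζ := isPrimitiveRoot_stdAddChar_one (m := m)
  have himage : Finset.univ.image (stdAddChar (N := m)) = nthRootsFinset m (1 : ℂ) := by
    refine Finset.eq_of_subset_of_card_le (fun ζ hζ' => ?_) ?_
    · obtain ⟨k, -, rfl⟩ := Finset.mem_image.mp hζ'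
      rw [mem_nthRootsFinset (NeZero.pos m), ← AddChar.map_nsmul_eq_pow, nsmul_eq_mul,
        natCast_self, zero_mul, AddChar.map_zero_eq_one]
    · rw [hζ.card_nthRootsFinset, Finset.card_image_of_injective _ injective_stdAddChar,
        Finset.card_univ, ZMod.card]
  rw [← Finset.prod_image fun a _ b _ h => injective_stdAddChar h, himage]
  simpa [eval_prod] using (congrArg (eval x) (X_pow_sub_one_eq_prod (NeZero.pos m) hζ)).symm

theorem prod_stdAddChar : ∏ k : ZMod m, stdAddChar k = (-1) ^ (m + 1) := by
  have h := prod_sub_stdAddChar (m := m) 0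
  simp only [zero_sub, Finset.prod_neg, Finset.card_univ, ZMod.card,
    zero_pow (NeZero.ne m)] at h
  have hsq : ((-1 : ℂ) ^ m) ^ 2 = 1 := by rw [← pow_mul, mul_comm, pow_mul]; simp
  linear_combination (-1) ^ m * h - (∏ k : ZMod m, stdAddChar k) * hsq

theorem prod_one_add_stdAddChar_add_neg :
    ∏ k : ZMod m, (1 + stdAddChar k + stdAddChar (-k))
      = if 3 ∣ m then 0 else (-1) ^ (m + 1) * 3 := by
  set α := Complex.exp (2 * Real.pi * Complex.I / (3 : ℕ))
  have hα : IsPrimitiveRoot α 3 := Complex.isPrimitiveRoot_exp 3 (by norm_num)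
  have hfactor : ∀ k : ZMod m, 1 + stdAddChar k + stdAddChar (-k)
      = stdAddChar (-k) * ((α - stdAddChar k) * (α ^ 2 - stdAddChar k)) := by
    intro k
    have hinv : stdAddChar (-k) * stdAddChar k = 1 := by
      rw [← AddChar.map_add_eq_mul, neg_add_cancel, AddChar.map_zero_eq_one]
    linear_combination -(1 + stdAddChar k) * hinv
      + stdAddChar k * stdAddChar (-k) * hα.sq_add_self_add_one - stdAddChar (-k) * hα.pow_eq_one
  have hneg : ∏ k : ZMod m, stdAddChar (-k) = (-1) ^ (m + 1) := by
    rw [← prod_stdAddChar]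
    exact Fintype.prod_equiv (Equiv.neg _) _ _ fun _ => rfl
  rw [Finset.prod_congr rfl fun k _ => hfactor k]
  simp only [Finset.prod_mul_distrib, hneg, prod_sub_stdAddChar]
  rw [← pow_mul, mul_comm 2 m, pow_mul]
  split_ifs with h3
  · rw [(hα.pow_eq_one_iff_dvd m).mpr h3]
    ring
  · have hβ := hα.pow_of_coprime m ((Nat.Prime.coprime_iff_not_dvd Nat.prime_three).mpr h3).symm
    linear_combination (-1) ^ (m + 1) * (-hβ.sq_add_self_add_one + hβ.pow_eq_one)

end ZMod

section Border

variable {R : Type*} [CommRing R] {m : ℕ}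

@[simp] theorem border_zero_zero (A : Matrix (Fin m) (Fin m) R) : border A 0 0 = 0 := rfl

@[simp] theorem border_zero_succ (A : Matrix (Fin m) (Fin m) R) (j : Fin m) :
    border A 0 j.succ = 1 := by
  simp [border]

@[simp] theorem border_succ_zero (A : Matrix (Fin m) (Fin m) R) (i : Fin m) :
    border A i.succ 0 = 1 := by
  simp [border]

@[simp] theorem border_succ_succ (A : Matrix (Fin m) (Fin m) R) (i j : Fin m) :
    border A i.succ j.succ = A i j := by
  simp [border]

/-- Adding `c` times the first row to the others. -/
theorem det_border_add_const (A : Matrix (Fin m) (Fin m) R) (c : R) :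
    (border (A + of fun _ _ => c)).det = (border A).det := by
  set L : Matrix (Fin (m + 1)) (Fin (m + 1)) R :=
    of fun i j => if i = j then 1 else if j = 0 then c else 0
  have hL : L.det = 1 := by
    rw [det_of_isLowerTriangular L fun i j (hij : i < j) => ?_]
    · simp [L]
    · simp [L, hij.ne, ((Fin.zero_le i).trans_lt hij).ne']
  have hmul : border (A + of fun _ _ => c) = L * border A := by
    ext i j
    refine Fin.cases ?_ (fun i => ?_) i <;> refine Fin.cases ?_ (fun j => ?_) j <;>
      simp [mul_apply, Fin.sum_univ_succ, L, Fin.succ_ne_zero,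
        fun x : Fin m => (Fin.succ_ne_zero x).symm, add_comm]
  rw [hmul, det_mul, hL, one_mul]

/-- Multiplying the first column by `c` and subtracting the others clears it below the corner,
where `-m` is left. -/
theorem det_border_mul_of_mulVec_one (A : Matrix (Fin m) (Fin m) R) (c : R)
    (hA : A *ᵥ 1 = c • 1) : (border A).det * c = -m * A.det := by
  set N : Matrix (Fin (m + 1)) (Fin (m + 1)) R :=
    of fun i j => if i = j then (if i = 0 then c else 1) else if j = 0 then -1 else 0
  have hN : N.det = c := by
    rw [det_of_isLowerTriangular N fun i j (hij : i < j) => ?_]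
    · simp [N]
    · simp [N, hij.ne, ((Fin.zero_le i).trans_lt hij).ne']
  have hrow : ∀ i, ∑ j, A i j = c := fun i => by
    simpa [mulVec, dotProduct] using congrFun hA i
  set M : Matrix (Fin (m + 1)) (Fin (m + 1)) R :=
    of fun i j => if j = 0 then (if i = 0 then -(m : R) else 0) else border A i j
  have hmul : border A * N = M := by
    ext i j
    refine Fin.cases ?_ (fun i => ?_) i <;> refine Fin.cases ?_ (fun j => ?_) j <;>
      simp [mul_apply, Fin.sum_univ_succ, N, M, Fin.succ_ne_zero, hrow]
  have hsub : M.submatrix Fin.succ Fin.succ = A := by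
    ext i j
    simp [M, Fin.succ_ne_zero]
  rw [← hN, ← det_mul, hmul, det_succ_column_zero, Fin.sum_univ_succ]
  simp [M, Fin.succ_ne_zero, hsub]

end Border

def cycleNbhd (m : ℕ) (R : Type*) [AddMonoidWithOne R] : Matrix (ZMod m) (ZMod m) R :=
  circulant (Pi.single 0 1 + Pi.single 1 1 + Pi.single (-1) 1)

section CycleNbhd

variable {m : ℕ} [NeZero m]

theorem cycleNbhd_mulVec_addChar {R : Type*} [CommRing R] (ψ : AddChar (ZMod m) R) :
    cycleNbhd m R *ᵥ ψ = (1 + ψ 1 + ψ (-1)) • ⇑ψ := by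
  rw [cycleNbhd, circulant_mulVec_addChar]
  congr 1
  simp [add_mul, Finset.sum_add_distrib, Pi.single_apply]
  ring

theorem cycleNbhd_mulVec_one {R : Type*} [CommRing R] : cycleNbhd m R *ᵥ 1 = (3 : R) • 1 := by
  have := cycleNbhd_mulVec_addChar (R := R) (m := m) 1
  rwa [AddChar.one_apply, AddChar.one_apply, one_add_one_eq_two, two_add_one_eq_three,
    AddChar.coe_one] at this

theorem det_cycleNbhd : (cycleNbhd m ℝ).det = if 3 ∣ m then 0 else (-1) ^ (m + 1) * 3 := by
  apply Complex.ofReal_injective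
  have hmap : (cycleNbhd m ℝ).map Complex.ofRealHom = cycleNbhd m ℂ := by
    ext i j
    simp only [cycleNbhd, map_apply, circulant_apply, Pi.add_apply, Pi.single_apply]
    split_ifs <;> simp
  have heig : ∀ k : ZMod m, cycleNbhd m ℂ *ᵥ stdAddChar.mulShift k
      = (1 + stdAddChar k + stdAddChar (-k)) • ⇑(stdAddChar.mulShift k) := by
    intro k
    simpa using cycleNbhd_mulVec_addChar (stdAddChar.mulShift k)
  rw [← Complex.ofRealHom_eq_coe, RingHom.map_det, RingHom.mapMatrix_apply, hmap,
    det_eq_prod_of_mulVec_mulShift _ _ heig, prod_one_add_stdAddChar_add_neg]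
  split_ifs <;> simp

theorem det_border_neg_two_smul_cycleNbhd :
    (border (((-2 : ℝ) • cycleNbhd m ℝ).submatrix (finEquiv m).toEquiv (finEquiv m).toEquiv)).det
      = if 3 ∣ m then 0 else -((m : ℝ) * 2 ^ (m - 1)) := by
  set A := ((-2 : ℝ) • cycleNbhd m ℝ).submatrix (finEquiv m).toEquiv (finEquiv m).toEquiv
  have hA : A *ᵥ 1 = (-6 : ℝ) • 1 := by
    have h6 : ((-2 : ℝ) • cycleNbhd m ℝ) *ᵥ 1 = (-6 : ℝ) • 1 := by
      rw [smul_mulVec, cycleNbhd_mulVec_one, smul_smul]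
      norm_num
    ext i
    rw [submatrix_mulVec_equiv]
    exact congrFun h6 _
  have hdet := det_border_mul_of_mulVec_one A (-6) hA
  have hsq : ((-1 : ℝ) ^ m) ^ 2 = 1 := by rw [← pow_mul, mul_comm, pow_mul]; simp
  have h2 : (2 : ℝ) ^ m = 2 ^ (m - 1) * 2 := by
    rw [← pow_succ, Nat.sub_add_cancel NeZero.one_le]
  rw [det_submatrix_equiv_self, det_smul, det_cycleNbhd, ZMod.card, neg_pow] at hdet
  split_ifs at hdet ⊢
  · linear_combination hdet / -6
  · linear_combination hdet / -6 - (m : ℝ) / 2 * 2 ^ m * hsq - (m : ℝ) / 2 * h2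

end CycleNbhd

theorem EW_succ_eq_border {m : ℕ} [NeZero m] (hm : 3 ≤ m) :
    EW (m + 1) = border (((-2 : ℝ) • cycleNbhd m ℝ).submatrix (finEquiv m).toEquiv
      (finEquiv m).toEquiv + of fun _ _ => 2) := by
  ext i j
  refine Fin.cases ?_ (fun i => ?_) i <;> refine Fin.cases ?_ (fun j => ?_) j
  · simp [EW]
  · simp [EW, (Fin.succ_ne_zero j).symm]
  · simp [EW, Fin.succ_ne_zero i]
  have hcast : ∀ k : Fin m, ((k.succ : ℕ) : ZMod m) = finEquiv m k + 1 := by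
    simp [finEquiv_apply]
  have h2 := two_ne_zero_of_three_le hm
  have h1 : (1 : ZMod m) ≠ 0 := fun h => h2 (by linear_combination 2 * h)
  have h1n : (1 : ZMod m) ≠ -1 := fun h => h2 (by linear_combination h)
  simp only [EW, of_apply, Fin.succ_inj, ← (finEquiv m).injective.eq_iff,
    ← sub_eq_zero (a := finEquiv m i)]
  rw [if_neg (c := (i.succ : ℕ) = 0 ∨ (j.succ : ℕ) = 0) (by simp)]
  change (if _ then (0 : ℝ) else if ((j.succ : ℕ) : ZMod m) - ((i.succ : ℕ) : ZMod m) = 1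
    ∨ ((i.succ : ℕ) : ZMod m) - ((j.succ : ℕ) : ZMod m) = 1 then 0 else 2) = border _ i.succ j.succ
  rw [hcast, hcast, border_succ_succ, add_sub_add_right_eq_sub, add_sub_add_right_eq_sub,
    ← neg_sub (finEquiv m i)]
  simp only [neg_eq_iff_eq_neg, cycleNbhd, Matrix.add_apply, Matrix.smul_apply, submatrix_apply,
    circulant_apply, Pi.add_apply, Pi.single_apply, of_apply, smul_eq_mul]
  generalize finEquiv m i - finEquiv m j = d
  by_cases hd0 : d = 0
  · simp [hd0, h1.symm, (neg_ne_zero.mpr h1).symm]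
  by_cases hd1 : d = 1
  · simp [hd1, h1, h1n]
  by_cases hdn : d = -1
  · simp [hdn, h1n.symm, neg_ne_zero.mpr h1]
  simp [hd0, hd1, hdn]

theorem stmt4 (n : ℕ) (h : 5 ≤ n) :
    (EW n).det = if n % 3 = 1 then 0 else 2 ^ (n - 2) * (1 - (n : ℝ)) := by
  obtain ⟨m, rfl⟩ : ∃ m, n = m + 1 := ⟨n - 1, by omega⟩
  have : NeZero m := ⟨by omega⟩
  rw [EW_succ_eq_border (by omega), det_border_add_const, det_border_neg_two_smul_cycleNbhd,
    show m + 1 - 2 = m - 1 by omega]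
  split_ifs <;> first | omega | push_cast; ring
end
end

section
/- For n ≥ 5, the spectral radius of the eccentricity matrix E(W_n) of the wheel graph equals (n−4) + √(n²−7n+15). -/
open Matrix

noncomputable section

lemma EW_nonneg (n : ℕ) (i j : Fin n) : 0 ≤ EW n i j := by
  unfold EW; simp only [Matrix.of_apply]; split_ifs <;> norm_num

lemma EW_symm (n : ℕ) (i j : Fin n) : EW n i j = EW n j i := by
  unfold EW
  simp only [Matrix.of_apply]
  by_cases hij : i = j
  · subst hij; rfl
  · rw [if_neg hij, if_neg (Ne.symm hij)]
    exact if_congr or_comm rfl (if_congr or_comm rfl rfl)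

lemma cast_inj_aux (n : ℕ) [NeZero n] (h : 5 ≤ n) (i j : Fin n) (hi : i ≠ 0) (hj : j ≠ 0)
    (hc : ((j : ℕ) : ZMod (n - 1)) = ((i : ℕ) : ZMod (n - 1))) : i = j := by
  have hi1 : 1 ≤ (i : ℕ) := Nat.one_le_iff_ne_zero.mpr (fun hz => hi (Fin.ext (by simp [hz])))
  have hj1 : 1 ≤ (j : ℕ) := Nat.one_le_iff_ne_zero.mpr (fun hz => hj (Fin.ext (by simp [hz])))
  have him : (i : ℕ) ≤ n - 1 := by have := i.isLt; omega
  have hjm : (j : ℕ) ≤ n - 1 := by have := j.isLt; omega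
  rw [ZMod.natCast_eq_natCast_iff] at hc
  have hc' : (j : ℕ) % (n - 1) = (i : ℕ) % (n - 1) := hc
  have hmod : ∀ a : ℕ, 1 ≤ a → a ≤ n - 1 → a % (n - 1) = if a = n - 1 then 0 else a := by
    intro a h1 h2
    rcases eq_or_lt_of_le h2 with rfl | hlt
    · simp
    · rw [Nat.mod_eq_of_lt hlt, if_neg (by omega)]
  rw [hmod _ hj1 hjm, hmod _ hi1 him] at hc'
  apply Fin.ext
  split_ifs at hc' <;> omega

lemma aux_gsum (m : ℕ) [NeZero m] (hm : 4 ≤ m) :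
    ∑ e : ZMod m, (if e = 0 then (0 : ℝ) else if e = 1 ∨ e = -1 then 0 else 2)
      = 2 * m - 6 := by
  have h10 : (1 : ZMod m) ≠ 0 := by
    intro hEq
    have h1 : ((1 : ℕ) : ZMod m) = 0 := by exact_mod_cast hEq
    have := Nat.le_of_dvd one_pos ((ZMod.natCast_eq_zero_iff 1 m).mp h1)
    omega
  have hm10 : (-1 : ZMod m) ≠ 0 := fun hEq => h10 (by linear_combination -hEq)
  have h1m1 : (1 : ZMod m) ≠ -1 := by
    intro hEq
    have h2 : ((2 : ℕ) : ZMod m) = 0 := by push_cast; linear_combination hEq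
    have := Nat.le_of_dvd (by norm_num) ((ZMod.natCast_eq_zero_iff 2 m).mp h2)
    omega
  have hpt : ∀ e : ZMod m, (if e = 0 then (0 : ℝ) else if e = 1 ∨ e = -1 then 0 else 2)
      = 2 - (if e = 0 then (2 : ℝ) else 0) - (if e = 1 then 2 else 0)
          - (if e = -1 then 2 else 0) := by
    intro e
    by_cases h0 : e = 0
    · subst h0
      rw [if_pos rfl, if_pos rfl, if_neg (Ne.symm h10), if_neg (Ne.symm hm10)]; ring
    by_cases h1 : e = 1
    · subst h1
      rw [if_neg h0, if_pos (Or.inl rfl), if_neg h0, if_pos rfl, if_neg h1m1]; ring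
    by_cases h2 : e = -1
    · subst h2
      rw [if_neg h0, if_pos (Or.inr rfl), if_neg h0,
        if_neg (fun hh => h1m1 hh.symm), if_pos rfl]; ring
    · rw [if_neg h0, if_neg (by tauto), if_neg h0, if_neg h1, if_neg h2]; ring
  rw [Finset.sum_congr rfl fun e _ => hpt e]
  rw [Finset.sum_sub_distrib, Finset.sum_sub_distrib, Finset.sum_sub_distrib,
    Finset.sum_const, Finset.sum_ite_eq', Finset.sum_ite_eq', Finset.sum_ite_eq']
  simp [Finset.card_univ, ZMod.card, nsmul_eq_mul]
  ring

lemma aux_rowsum (n : ℕ) [NeZero n] (h : 5 ≤ n) (i : Fin n) (hi : i ≠ 0) :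
    ∑ j ∈ Finset.univ.erase (0 : Fin n), EW n i j = 2 * (n : ℝ) - 8 := by
  haveI : NeZero (n - 1) := ⟨by omega⟩
  have hi1 : 1 ≤ (i : ℕ) := Nat.one_le_iff_ne_zero.mpr (fun hz => hi (Fin.ext (by simp [hz])))
  have key : ∑ j ∈ Finset.univ.erase (0 : Fin n), EW n i j
      = ∑ d : ZMod (n - 1), (if d - ((i : ℕ) : ZMod (n - 1)) = 0 then (0 : ℝ)
          else if d - ((i : ℕ) : ZMod (n - 1)) = 1 ∨ d - ((i : ℕ) : ZMod (n - 1)) = -1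
            then 0 else 2) := by
    refine Finset.sum_nbij' (fun j => (((j : ℕ) : ZMod (n - 1))))
      (fun d => (⟨if d.val = 0 then n - 1 else d.val, by have := ZMod.val_lt d; split_ifs <;> omega⟩ : Fin n))
      (fun a _ => Finset.mem_univ _) ?_ ?_ ?_ ?_
    · intro d _
      refine Finset.mem_erase.mpr ⟨?_, Finset.mem_univ _⟩
      intro hEq
      have hv := congrArg Fin.val hEq
      simp only [Fin.val_zero] at hv
      split_ifs at hv with hc
      · omega
      · exact hc hv
    · intro j hj
      have hj0 : j ≠ 0 := (Finset.mem_erase.mp hj).1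
      have hj1 : 1 ≤ (j : ℕ) :=
        Nat.one_le_iff_ne_zero.mpr (fun hz => hj0 (Fin.ext (by simp [hz])))
      have hjm : (j : ℕ) ≤ n - 1 := by have := j.isLt; omega
      apply Fin.ext
      simp only [ZMod.val_natCast]
      rcases eq_or_lt_of_le hjm with hEq | hlt
      · rw [hEq, Nat.mod_self, if_pos rfl]
      · rw [Nat.mod_eq_of_lt hlt, if_neg (by omega)]
    · intro d _
      show (((if d.val = 0 then n - 1 else d.val : ℕ)) : ZMod (n - 1)) = d
      by_cases h0 : d.val = 0
      · rw [if_pos h0, ZMod.natCast_self]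
        exact (((ZMod.val_eq_zero d).mp h0)).symm
      · rw [if_neg h0, ZMod.natCast_zmod_val]
    · intro j hj
      have hj0 : j ≠ 0 := (Finset.mem_erase.mp hj).1
      have hj1 : 1 ≤ (j : ℕ) :=
        Nat.one_le_iff_ne_zero.mpr (fun hz => hj0 (Fin.ext (by simp [hz])))
      have hi0 : (i : ℕ) ≠ 0 := by omega
      have hj0' : (j : ℕ) ≠ 0 := by omega
      unfold EW
      simp only [Matrix.of_apply]
      by_cases hij : i = j
      · subst hij
        rw [if_pos rfl, if_pos (by rw [sub_self])]
      · rw [if_neg hij, if_neg (by push_neg; exact ⟨hi0, hj0'⟩)]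
        have hd0 : ((j : ℕ) : ZMod (n - 1)) - ((i : ℕ) : ZMod (n - 1)) ≠ 0 := by
          intro hEq
          exact hij (cast_inj_aux n h i j hi hj0 (by linear_combination hEq))
        rw [if_neg hd0]
        have hcond : (((j : ℕ) : ZMod (n - 1)) - ((i : ℕ) : ZMod (n - 1)) = 1
              ∨ ((i : ℕ) : ZMod (n - 1)) - ((j : ℕ) : ZMod (n - 1)) = 1)
            ↔ (((j : ℕ) : ZMod (n - 1)) - ((i : ℕ) : ZMod (n - 1)) = 1
              ∨ ((j : ℕ) : ZMod (n - 1)) - ((i : ℕ) : ZMod (n - 1)) = -1) := by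
          constructor
          · rintro (h' | h')
            · exact Or.inl h'
            · exact Or.inr (by linear_combination -h')
          · rintro (h' | h')
            · exact Or.inl h'
            · exact Or.inr (by linear_combination -h')
        exact if_congr hcond rfl rfl
  rw [key]
  rw [Fintype.sum_equiv (Equiv.subRight (((i : ℕ)) : ZMod (n - 1)))
      (fun d => (if d - ((i : ℕ) : ZMod (n - 1)) = 0 then (0 : ℝ)
          else if d - ((i : ℕ) : ZMod (n - 1)) = 1 ∨ d - ((i : ℕ) : ZMod (n - 1)) = -1
            then 0 else 2))
      (fun e => (if e = 0 then (0 : ℝ) else if e = 1 ∨ e = -1 then 0 else 2))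
      (fun d => rfl)]
  rw [aux_gsum (n - 1) (by omega), Nat.cast_sub (by omega), Nat.cast_one]
  ring

theorem stmt10 (n : ℕ) (h : 5 ≤ n) :
    spectralRadius ℝ (EW n) =
      ENNReal.ofReal ((n : ℝ) - 4 + Real.sqrt ((n : ℝ) ^ 2 - 7 * n + 15)) := by
  haveI : NeZero n := ⟨by omega⟩
  have hn5 : (5 : ℝ) ≤ (n : ℝ) := by exact_mod_cast h
  set s := Real.sqrt ((n : ℝ) ^ 2 - 7 * n + 15) with hs
  have hdisc : (0 : ℝ) ≤ (n : ℝ) ^ 2 - 7 * (n : ℝ) + 15 := by nlinarith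
  have hs2 : s ^ 2 = (n : ℝ) ^ 2 - 7 * n + 15 := Real.sq_sqrt hdisc
  have hs0 : 0 ≤ s := Real.sqrt_nonneg _
  set r := (n : ℝ) - 4 + s with hrdef
  have hr0 : 0 < r := by rw [hrdef]; nlinarith
  have hkey : r * r = 2 * ((n : ℝ) - 4) * r + ((n : ℝ) - 1) := by
    rw [hrdef]; nlinarith [hs2]
  set w : Fin n → ℝ := fun i => if i = 0 then ((n : ℝ) - 1) / r else 1 with hwdef
  have hwpos : ∀ i, 0 < w i := by
    intro i
    rw [hwdef]
    dsimp only
    split_ifs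
    · exact div_pos (by linarith) hr0
    · norm_num
  have h0mem : (0 : Fin n) ∈ (Finset.univ : Finset (Fin n)) := Finset.mem_univ _
  have hAw : ∀ i, (EW n *ᵥ w) i = r * w i := by
    intro i
    simp only [Matrix.mulVec, dotProduct]
    rw [← Finset.add_sum_erase _ _ h0mem]
    by_cases hi : i = 0
    · subst hi
      have h00 : EW n 0 0 = 0 := by unfold EW; simp
      have hrest : ∀ j ∈ Finset.univ.erase (0 : Fin n), EW n 0 j * w j = 1 := by
        intro j hj
        have hj0 := (Finset.mem_erase.mp hj).1
        have hEW : EW n 0 j = 1 := by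
          unfold EW
          simp only [Matrix.of_apply]
          rw [if_neg (Ne.symm hj0), if_pos (Or.inl (Fin.val_zero n))]
        rw [hEW, hwdef]
        dsimp only
        rw [if_neg hj0, mul_one]
      rw [h00, zero_mul, zero_add, Finset.sum_congr rfl hrest, Finset.sum_const,
        Finset.card_erase_of_mem h0mem, Finset.card_univ, Fintype.card_fin,
        nsmul_eq_mul, mul_one, Nat.cast_sub (by omega), Nat.cast_one]
      rw [hwdef]
      dsimp only
      rw [if_pos rfl]
      field_simp
    · have hEWi0 : EW n i 0 = 1 := by
        unfold EW
        simp only [Matrix.of_apply]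
        rw [if_neg hi, if_pos (Or.inr (Fin.val_zero n))]
      have hrest : ∀ j ∈ Finset.univ.erase (0 : Fin n), EW n i j * w j = EW n i j := by
        intro j hj
        rw [hwdef]
        dsimp only
        rw [if_neg (Finset.mem_erase.mp hj).1, mul_one]
      rw [hEWi0, one_mul, Finset.sum_congr rfl hrest, aux_rowsum n h i hi]
      rw [hwdef]
      dsimp only
      rw [if_pos rfl, if_neg hi, mul_one]
      have hdiv : (↑n - 1 : ℝ) / r = r - (2 * ↑n - 8) := by
        rw [div_eq_iff (ne_of_gt hr0)]
        linear_combination -hkey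
      rw [hdiv]
      ring
  have hwne : w ≠ 0 := by
    intro hEq
    have h0 := hwpos 0
    rw [hEq] at h0
    simp at h0
  have hmem : r ∈ spectrum ℝ (EW n) := by
    rw [spectrum.mem_iff]
    intro hUnit
    rw [Matrix.isUnit_iff_isUnit_det, isUnit_iff_ne_zero] at hUnit
    apply hUnit
    rw [← Matrix.exists_mulVec_eq_zero_iff]
    refine ⟨w, hwne, ?_⟩
    rw [Algebra.algebraMap_eq_smul_one, Matrix.sub_mulVec, Matrix.smul_mulVec,
      Matrix.one_mulVec]
    funext i
    simp [hAw i]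
  have hbound : ∀ μ : ℝ, μ ∈ spectrum ℝ (EW n) → |μ| ≤ r := by
    intro μ hμ
    rw [spectrum.mem_iff] at hμ
    rw [Matrix.isUnit_iff_isUnit_det, isUnit_iff_ne_zero, not_ne_iff,
      ← Matrix.exists_mulVec_eq_zero_iff] at hμ
    obtain ⟨v, hv0, hv⟩ := hμ
    rw [Algebra.algebraMap_eq_smul_one, Matrix.sub_mulVec, Matrix.smul_mulVec,
      Matrix.one_mulVec] at hv
    have heig : ∀ i, (EW n *ᵥ v) i = μ * v i := by
      intro i
      have h1 := congrFun hv i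
      simp only [Pi.sub_apply, Pi.smul_apply, smul_eq_mul, Pi.zero_apply, sub_eq_zero] at h1
      exact h1.symm
    set S := ∑ j, w j * |v j| with hS
    have hSpos : 0 < S := by
      obtain ⟨k, hk⟩ := Function.ne_iff.mp hv0
      simp only [Pi.zero_apply] at hk
      apply Finset.sum_pos'
      · intro j _
        exact mul_nonneg (hwpos j).le (abs_nonneg _)
      · exact ⟨k, Finset.mem_univ _, mul_pos (hwpos k) (abs_pos.mpr hk)⟩
    have hstep : |μ| * S ≤ r * S := by
      have h1 : ∀ i, |μ| * |v i| ≤ ∑ j, EW n i j * |v j| := by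
        intro i
        calc |μ| * |v i| = |μ * v i| := (abs_mul μ (v i)).symm
          _ = |∑ j, EW n i j * v j| := by
              rw [← heig i]
              simp only [Matrix.mulVec, dotProduct]
          _ ≤ ∑ j, |EW n i j * v j| := Finset.abs_sum_le_sum_abs _ _
          _ = ∑ j, EW n i j * |v j| := by
              refine Finset.sum_congr rfl fun j _ => ?_
              rw [abs_mul, abs_of_nonneg (EW_nonneg n i j)]
      calc |μ| * S = ∑ i, w i * (|μ| * |v i|) := by
            rw [hS, Finset.mul_sum]
            exact Finset.sum_congr rfl fun i _ => by ring
        _ ≤ ∑ i, w i * (∑ j, EW n i j * |v j|) := by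
            refine Finset.sum_le_sum fun i _ => ?_
            exact mul_le_mul_of_nonneg_left (h1 i) (hwpos i).le
        _ = ∑ i, ∑ j, w i * (EW n i j * |v j|) :=
            Finset.sum_congr rfl fun i _ => Finset.mul_sum _ _ _
        _ = ∑ j, ∑ i, w i * (EW n i j * |v j|) := Finset.sum_comm
        _ = ∑ j, (EW n *ᵥ w) j * |v j| := by
            refine Finset.sum_congr rfl fun j _ => ?_
            simp only [Matrix.mulVec, dotProduct, Finset.sum_mul]
            refine Finset.sum_congr rfl fun i _ => ?_
            rw [EW_symm n j i]
            ring
        _ = ∑ j, r * (w j * |v j|) := Finset.sum_congr rfl fun j _ => by rw [hAw j]; ring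
        _ = r * S := by rw [hS, Finset.mul_sum]
    exact le_of_mul_le_mul_right hstep hSpos
  unfold spectralRadius
  apply le_antisymm
  · refine iSup₂_le fun μ hμ => ?_
    rw [← Real.enorm_eq_ofReal hr0.le]
    refine ENNReal.coe_le_coe.mpr ?_
    rw [← NNReal.coe_le_coe]
    simp only [coe_nnnorm, Real.norm_eq_abs]
    rw [abs_of_pos hr0]
    exact hbound μ hμ
  · rw [← Real.enorm_eq_ofReal hr0.le]
    exact le_iSup₂ (f := fun k _ => (‖k‖₊ : ENNReal)) r hmem
end
end
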